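/- arXiv:2205.10229 — 2 statements merged into one kernel-verified Lean document; each statement's English description precedes it below -/
import Mathlib

section
/- With the hypotheses of the previous setting ($m$ smooth, non-increasing, positive, with finite limit $m_-$ at $-\infty$, and $1 - 2m(\mu)R \ge F_{\min} > 0$): for every $\varepsilon > 0$ there exists $R_0 > 0$ such that for all $0 < R < R_0$ and all $u \le u_0$, $1 \le \psi(u,R) < 1 + \varepsilon$. -/
open MeasureTheory Filter Set Real

/-- A function antitone on `Set.Iic u₀` has nonpositive derivative at every `μ ≤ u₀`. -/
lemma deriv_nonpos_of_antitoneOn (m : ℝ → ℝ) (u₀ : ℝ) (hdiff : Differentiable ℝ m)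
    (hmono : AntitoneOn m (Set.Iic u₀)) {μ : ℝ} (hμ : μ ≤ u₀) : deriv m μ ≤ 0 := by
  have h : Filter.Tendsto (slope m μ) (nhdsWithin μ {μ}ᶜ) (nhds (deriv m μ)) :=
    hasDerivAt_iff_tendsto_slope.1 (hdiff μ).hasDerivAt
  have h' : Filter.Tendsto (slope m μ) (nhdsWithin μ (Set.Iio μ)) (nhds (deriv m μ)) :=
    h.mono_left (nhdsWithin_mono μ (fun y hy => ne_of_lt hy))
  refine le_of_tendsto h' ?_
  filter_upwards [self_mem_nhdsWithin] with y hy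
  have hylt : y < μ := hy
  have hmy : m μ ≤ m y := hmono (le_trans hylt.le hμ) hμ hylt.le
  have : m y - m μ ≥ 0 := by linarith
  rw [slope_def_field]
  have hden : y - μ < 0 := by linarith
  exact div_nonpos_of_nonneg_of_nonpos (by linarith) hden.le

/-- Integrability and value of the integral of `deriv m` on `Set.Iic u`. -/
lemma integrableOn_deriv_Iic (m : ℝ → ℝ) (u₀ mInf : ℝ) (hdiff : Differentiable ℝ m)
    (hmono : AntitoneOn m (Set.Iic u₀))
    (hlim : Filter.Tendsto m Filter.atBot (nhds mInf)) {u : ℝ} (hu : u ≤ u₀) :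
    MeasureTheory.IntegrableOn (deriv m) (Set.Iic u) ∧
      ∫ μ in Set.Iic u, deriv m μ = m u - mInf := by
  have hd : ∀ x : ℝ, HasDerivAt m (deriv m x) x := fun x => (hdiff x).hasDerivAt
  -- reflected function
  have hdg : ∀ x : ℝ, HasDerivAt (fun x => m (-x)) (-(deriv m (-x))) x := by
    intro x
    simpa [Function.comp_def] using HasDerivAt.scomp x (hd (-x)) (hasDerivAt_neg' x)
  have hglim : Filter.Tendsto (fun x => m (-x)) Filter.atTop (nhds mInf) :=
    hlim.comp tendsto_neg_atTop_atBot
  have hnonneg : ∀ x ∈ Set.Ioi (-u), 0 ≤ -(deriv m (-x)) := by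
    intro x hx
    have : -x ≤ u₀ := by
      have : -u < x := hx
      linarith
    simpa using deriv_nonpos_of_antitoneOn m u₀ hdiff hmono this
  have hint : MeasureTheory.IntegrableOn (fun x => -(deriv m (-x))) (Set.Ioi (-u)) :=
    integrableOn_Ioi_deriv_of_nonneg' (fun x _ => hdg x) hnonneg hglim
  have hint2 : MeasureTheory.IntegrableOn (fun x => deriv m (-x)) (Set.Ici (-u)) := by
    rw [integrableOn_Ici_iff_integrableOn_Ioi]
    have h2 := hint.neg
    simp only [Pi.neg_def, neg_neg] at h2
    exact h2
  have hint3 : MeasureTheory.IntegrableOn (deriv m) (Set.Iic u) := by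
    have := (MeasurePreserving.integrableOn_comp_preimage
      (Measure.measurePreserving_neg (volume : Measure ℝ))
      (Homeomorph.neg ℝ).measurableEmbedding (f := deriv m) (s := Set.Iic u)).1
    rw [show (Neg.neg ⁻¹' Set.Iic u : Set ℝ) = Set.Ici (-u) from by
      ext x; simp [neg_le]] at this
    exact this (by simpa [Function.comp_def] using hint2)

  refine ⟨hint3, ?_⟩
  exact integral_Iic_of_hasDerivAt_of_tendsto' (fun x _ => hd x) hint3 hlim

/-- Uniform convergence `ψ → 1` as `R → 0`: for every `ε > 0` there is `R₀ > 0` such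
that `1 ≤ ψ(u,R) < 1 + ε` for all `0 < R < R₀` and `u ≤ u₀`. -/
theorem psi_tendsto_one (m : ℝ → ℝ) (u₀ Fmin mInf R₁ : ℝ)
    (hsmooth : ContDiff ℝ (⊤ : ℕ∞) m)
    (hmono : AntitoneOn m (Set.Iic u₀))
    (hpos : ∀ μ ≤ u₀, 0 < m μ)
    (hlim : Filter.Tendsto m Filter.atBot (nhds mInf))
    (hFmin0 : 0 < Fmin) (hFmin1 : Fmin ≤ 1) (hR₁ : 0 < R₁)
    (hF : ∀ μ ≤ u₀, ∀ R : ℝ, 0 < R → R < R₁ → 1 - 2 * m μ * R ≥ Fmin) :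
    ∀ ε > 0, ∃ R₀ : ℝ, 0 < R₀ ∧ R₀ ≤ R₁ ∧
      ∀ R : ℝ, 0 < R → R < R₀ → ∀ u ≤ u₀,
        1 ≤ Real.exp (-∫ μ in Set.Iic u, 2 * R * deriv m μ / (1 - 2 * m μ * R)) ∧
        Real.exp (-∫ μ in Set.Iic u, 2 * R * deriv m μ / (1 - 2 * m μ * R)) < 1 + ε := by
  intro ε hε
  have hdiff : Differentiable ℝ m := hsmooth.differentiable (by simp)
  have hmInf : 0 < mInf := by
    have h1 : m u₀ ≤ mInf := by
      refine ge_of_tendsto hlim ?_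
      filter_upwards [Filter.eventually_le_atBot u₀] with μ hμ
      exact hmono hμ (le_refl u₀ : u₀ ∈ Set.Iic u₀) hμ
    exact lt_of_lt_of_le (hpos u₀ le_rfl) h1
  set C : ℝ := 2 * mInf / Fmin with hC
  have hCpos : 0 < C := by positivity
  have hlog : 0 < Real.log (1 + ε) := Real.log_pos (by linarith)
  refine ⟨min R₁ (Real.log (1 + ε) / C), lt_min hR₁ (by positivity), min_le_left _ _, ?_⟩
  intro R hR hRlt u hu
  have hRR₁ : R < R₁ := lt_of_lt_of_le hRlt (min_le_left _ _)
  have hRC : R * C < Real.log (1 + ε) := by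
    have h1 : R < Real.log (1 + ε) / C := lt_of_lt_of_le hRlt (min_le_right _ _)
    calc R * C < (Real.log (1 + ε) / C) * C := by
          exact mul_lt_mul_of_pos_right h1 hCpos
      _ = Real.log (1 + ε) := by field_simp
  obtain ⟨hint, hval⟩ := integrableOn_deriv_Iic m u₀ mInf hdiff hmono hlim hu
  set I : ℝ := ∫ μ in Set.Iic u, 2 * R * deriv m μ / (1 - 2 * m μ * R) with hI
  have hden : ∀ μ ≤ u₀, Fmin ≤ 1 - 2 * m μ * R := fun μ hμ => hF μ hμ R hR hRR₁
  have hdneg : ∀ μ ≤ u₀, deriv m μ ≤ 0 := fun μ hμ =>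
    deriv_nonpos_of_antitoneOn m u₀ hdiff hmono hμ
  -- I ≤ 0
  have hInonpos : I ≤ 0 := by
    refine MeasureTheory.setIntegral_nonpos measurableSet_Iic ?_
    intro μ hμ
    have hμ' : μ ≤ u₀ := le_trans hμ hu
    exact div_nonpos_of_nonpos_of_nonneg
      (by nlinarith [hdneg μ hμ']) (by linarith [hden μ hμ'])
  -- bound -I
  have hbound : -I ≤ R * C := by
    have hneg : -I = ∫ μ in Set.Iic u, -(2 * R * deriv m μ / (1 - 2 * m μ * R)) := by
      rw [hI, ← MeasureTheory.integral_neg]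
    set g : ℝ → ℝ := fun μ => 2 * R / Fmin * (-(deriv m μ)) with hg
    have hgint : MeasureTheory.Integrable g ((volume : Measure ℝ).restrict (Set.Iic u)) :=
      (hint.neg.const_mul (2 * R / Fmin))
    have hmono2 : (∫ μ in Set.Iic u, -(2 * R * deriv m μ / (1 - 2 * m μ * R))) ≤
        ∫ μ in Set.Iic u, g μ := by
      refine MeasureTheory.integral_mono_of_nonneg ?_ hgint ?_
      · refine MeasureTheory.ae_restrict_of_forall_mem measurableSet_Iic ?_
        intro μ hμ
        have hμ' : μ ≤ u₀ := le_trans hμ hu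
        have := hdneg μ hμ'
        have hD := hden μ hμ'
        simp only [Pi.zero_apply, neg_nonneg]
        exact div_nonpos_of_nonpos_of_nonneg (by nlinarith) (by linarith)
      · refine MeasureTheory.ae_restrict_of_forall_mem measurableSet_Iic ?_
        intro μ hμ
        have hμ' : μ ≤ u₀ := le_trans hμ hu
        have hd := hdneg μ hμ'
        have hD := hden μ hμ'
        have e1 : -(2 * R * deriv m μ / (1 - 2 * m μ * R)) =
            (2 * R * (-(deriv m μ))) / (1 - 2 * m μ * R) := by ring
        have e2 : g μ = (2 * R * (-(deriv m μ))) / Fmin := by rw [hg]; ring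
        show -(2 * R * deriv m μ / (1 - 2 * m μ * R)) ≤ g μ
        rw [e1, e2]
        gcongr
        nlinarith
      done
    have hgval : (∫ μ in Set.Iic u, g μ) = 2 * R / Fmin * (mInf - m u) := by
      rw [hg]
      simp only []
      rw [MeasureTheory.integral_const_mul, MeasureTheory.integral_neg, hval]
      ring
    have hmu : 0 < m u := hpos u hu
    have : (∫ μ in Set.Iic u, g μ) ≤ R * C := by
      rw [hgval, hC]
      have key : 2 * R * (mInf - m u) ≤ R * (2 * mInf) := by nlinarith
      calc 2 * R / Fmin * (mInf - m u) = (2 * R * (mInf - m u)) / Fmin := by ring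
        _ ≤ (R * (2 * mInf)) / Fmin := (div_le_div_iff_of_pos_right hFmin0).mpr key
        _ = R * (2 * mInf / Fmin) := by ring
    linarith [hneg ▸ hmono2]
  constructor
  · exact Real.one_le_exp (by linarith)
  · calc Real.exp (-I) ≤ Real.exp (R * C) := Real.exp_le_exp.2 hbound
      _ < Real.exp (Real.log (1 + ε)) := Real.exp_lt_exp.2 hRC
      _ = 1 + ε := Real.exp_log (by linarith)
end

section
/- Let $u < 0$ with $|u| \ge 1$, $0 < R < 1$, $0 \le m \le M$, and $|u| R \le 2$. Then there exists a constant $C = C(M)$ such that for all real numbers $p$ (playing the role of $\phi$), $q$ ($= \phi_u$), $w$ ($= \phi_R$): $\big| (-u^2R^3 m' + 2mR^2(3+uR)) w^2 - 2mRp(u^2 q - 2(1+uR)w) \big| \cdot \frac{(\tilde r R)^2}{\psi|u|} \le C\big( u^2 q^2 + \frac{R}{|u|} w^2 + p^2 \big)$, provided $|m'| \le M$, $\frac{1}{2} \le \tilde r R \le 2$ and $1 \le \psi \le 2$. -/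
set_option maxHeartbeats 1000000

private lemma key_aux (M R a m P Q W : ℝ) (hM : 0 ≤ M) (hR : 0 < R) (hR1 : R < 1)
    (hm : 0 ≤ m) (hmM : m ≤ M) (ha1 : 1 ≤ a) (haR : a * R ≤ 2)
    (hP : 0 ≤ P) (hQ : 0 ≤ Q) (hW : 0 ≤ W) :
    (M * R ^ 3 * a ^ 2 * W ^ 2 + 6 * M * R ^ 2 * W ^ 2
      + 2 * m * R * P * (a ^ 2 * Q + 2 * W)) * 4
      ≤ (100 * M + 1) * (a ^ 2 * Q ^ 2 * a + R * W ^ 2 + P ^ 2 * a) := by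
  have ha0 : (0:ℝ) < a := lt_of_lt_of_le one_pos ha1
  have haR0 : 0 ≤ a * R := by positivity
  have T1 : M * R ^ 3 * a ^ 2 * W ^ 2 * 4 ≤ 16 * M * R * W ^ 2 := by
    nlinarith [mul_nonneg (mul_nonneg (mul_nonneg hM hR.le) (sq_nonneg W))
      (by nlinarith : (0:ℝ) ≤ 4 - (a * R) ^ 2)]
  have T2 : 6 * M * R ^ 2 * W ^ 2 * 4 ≤ 24 * M * R * W ^ 2 := by
    nlinarith [mul_nonneg (mul_nonneg hM (sq_nonneg W))
      (mul_nonneg hR.le (by linarith : (0:ℝ) ≤ 1 - R))]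
  have s1 : 8 * m * R * a ^ 2 * P * Q ≤ 8 * M * R * a ^ 2 * P * Q := by
    nlinarith [mul_nonneg (mul_nonneg (mul_nonneg hR.le (sq_nonneg a)) (mul_nonneg hP hQ))
      (by linarith : (0:ℝ) ≤ M - m)]
  have s2 : 8 * M * R * a ^ 2 * P * Q ≤ 16 * M * a * P * Q := by
    nlinarith [mul_nonneg (mul_nonneg hM (mul_nonneg ha0.le (mul_nonneg hP hQ)))
      (by linarith : (0:ℝ) ≤ 2 - a * R)]
  have s3 : 16 * M * a * P * Q ≤ 8 * M * a * P ^ 2 + 8 * M * a * Q ^ 2 := by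
    nlinarith [mul_nonneg (mul_nonneg hM ha0.le) (sq_nonneg (P - Q))]
  have s4 : 8 * M * a * Q ^ 2 ≤ 8 * M * a ^ 2 * Q ^ 2 * a := by
    nlinarith [mul_nonneg (mul_nonneg hM (sq_nonneg Q))
      (mul_nonneg ha0.le (by nlinarith : (0:ℝ) ≤ a ^ 2 - 1))]
  have s5 : 16 * m * R * P * W ≤ 16 * M * R * P * W := by
    nlinarith [mul_nonneg (mul_nonneg hR.le (mul_nonneg hP hW)) (by linarith : (0:ℝ) ≤ M - m)]
  have s6 : 16 * M * R * P * W ≤ 8 * M * P ^ 2 + 8 * M * R ^ 2 * W ^ 2 := by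
    nlinarith [mul_nonneg hM (sq_nonneg (P - R * W))]
  have s7 : 8 * M * R ^ 2 * W ^ 2 ≤ 8 * M * R * W ^ 2 := by
    nlinarith [mul_nonneg (mul_nonneg hM (sq_nonneg W))
      (mul_nonneg hR.le (by linarith : (0:ℝ) ≤ 1 - R))]
  have s8 : 8 * M * P ^ 2 ≤ 8 * M * P ^ 2 * a := by
    nlinarith [mul_nonneg (mul_nonneg hM (sq_nonneg P)) (by linarith : (0:ℝ) ≤ a - 1)]
  have n1 : (0:ℝ) ≤ R * W ^ 2 := mul_nonneg hR.le (sq_nonneg W)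
  have n2 : (0:ℝ) ≤ P ^ 2 * a := mul_nonneg (sq_nonneg P) ha0.le
  have n3 : (0:ℝ) ≤ a ^ 2 * Q ^ 2 * a :=
    mul_nonneg (mul_nonneg (sq_nonneg a) (sq_nonneg Q)) ha0.le
  nlinarith [T1, T2, s1, s2, s3, s4, s5, s6, s7, s8, n1, n2, n3,
    mul_nonneg hM n1, mul_nonneg hM n2, mul_nonneg hM n3]

/-- Pointwise control of the error term by the energy density on `𝓗ₛ`. -/
theorem error_term_control (M : ℝ) (hM : 0 ≤ M) :
    ∃ C > 0, ∀ u R m m' rt ψ p q w : ℝ,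
      u < 0 → 1 ≤ |u| → 0 < R → R < 1 → 0 ≤ m → m ≤ M → |u| * R ≤ 2 →
      |m'| ≤ M → 1 / 2 ≤ rt * R → rt * R ≤ 2 → 1 ≤ ψ → ψ ≤ 2 →
      |(-(u ^ 2) * R ^ 3 * m' + 2 * m * R ^ 2 * (3 + u * R)) * w ^ 2
          - 2 * m * R * p * (u ^ 2 * q - 2 * (1 + u * R) * w)|
        * ((rt * R) ^ 2 / (ψ * |u|))
      ≤ C * (u ^ 2 * q ^ 2 + R / |u| * w ^ 2 + p ^ 2) := by
  refine ⟨100 * M + 1, by positivity, ?_⟩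
  intro u R m m' rt ψ p q w hu hu1 hR hR1 hm hmM huR hm' hrt1 hrt2 hψ1 hψ2
  have ha : (0:ℝ) < |u| := lt_of_lt_of_le one_pos hu1
  have hau : |u| = -u := abs_of_neg hu
  have hm'1 : -M ≤ m' := neg_le_of_abs_le hm'
  have hm'2 : m' ≤ M := le_of_abs_le hm'
  set E := (-(u ^ 2) * R ^ 3 * m' + 2 * m * R ^ 2 * (3 + u * R)) * w ^ 2
      - 2 * m * R * p * (u ^ 2 * q - 2 * (1 + u * R) * w) with hE
  -- bound the geometric factor
  have hD : (rt * R) ^ 2 / (ψ * |u|) ≤ 4 / |u| := by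
    apply div_le_div₀ (by positivity) (by nlinarith) ha (by nlinarith)
  have h1 : |E| * ((rt * R) ^ 2 / (ψ * |u|)) ≤ |E| * (4 / |u|) :=
    mul_le_mul_of_nonneg_left hD (abs_nonneg _)
  refine h1.trans ?_
  -- bound |E|
  have huR2 : -2 ≤ u * R := by nlinarith [abs_of_neg hu]
  have huR0 : u * R ≤ 0 := by nlinarith
  have h3a : (0:ℝ) ≤ 3 + u * R := by linarith
  have h3b : 3 + u * R ≤ 3 := by linarith
  have hA1 : u ^ 2 * R ^ 3 * m' ≤ u ^ 2 * R ^ 3 * M :=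
    mul_le_mul_of_nonneg_left hm'2 (by positivity)
  have hA2 : u ^ 2 * R ^ 3 * (-M) ≤ u ^ 2 * R ^ 3 * m' :=
    mul_le_mul_of_nonneg_left hm'1 (by positivity)
  have hA3 : (0:ℝ) ≤ R ^ 2 * (m * (3 + u * R)) :=
    mul_nonneg (sq_nonneg R) (mul_nonneg hm h3a)
  have hA4 : R ^ 2 * (m * (3 + u * R)) ≤ R ^ 2 * (3 * M) := by
    have : m * (3 + u * R) ≤ 3 * M := by nlinarith
    exact mul_le_mul_of_nonneg_left this (sq_nonneg R)
  have hB : |E| ≤ M * R ^ 3 * u ^ 2 * w ^ 2 + 6 * M * R ^ 2 * w ^ 2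
      + 2 * m * R * |p| * (u ^ 2 * |q| + 2 * |w|) := by
    have t1 : |(-(u ^ 2) * R ^ 3 * m' + 2 * m * R ^ 2 * (3 + u * R)) * w ^ 2|
        ≤ M * R ^ 3 * u ^ 2 * w ^ 2 + 6 * M * R ^ 2 * w ^ 2 := by
      rw [abs_mul, abs_sq]
      have hAb : |(-(u ^ 2) * R ^ 3 * m' + 2 * m * R ^ 2 * (3 + u * R))|
          ≤ M * R ^ 3 * u ^ 2 + 6 * M * R ^ 2 := by
        rw [abs_le]
        constructor
        · linarith [hA1, hA3]
        · linarith [hA2, hA4]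
      linarith [mul_le_mul_of_nonneg_right hAb (sq_nonneg w)]
    have t2 : |2 * m * R * p * (u ^ 2 * q - 2 * (1 + u * R) * w)|
        ≤ 2 * m * R * |p| * (u ^ 2 * |q| + 2 * |w|) := by
      rw [abs_mul]
      have e1 : |2 * m * R * p| = 2 * m * R * |p| := by
        rw [abs_mul]
        rw [abs_of_nonneg (by positivity : (0:ℝ) ≤ 2 * m * R)]
      rw [e1]
      apply mul_le_mul_of_nonneg_left ?_ (by positivity)
      calc |u ^ 2 * q - 2 * (1 + u * R) * w| ≤ |u ^ 2 * q| + |2 * (1 + u * R) * w| :=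
            abs_sub _ _
        _ ≤ u ^ 2 * |q| + 2 * |w| := by
            rw [abs_mul, abs_sq, abs_mul]
            have h2c : |2 * (1 + u * R)| ≤ 2 := by
              rw [abs_le]
              constructor
              · linarith
              · linarith
            have := mul_le_mul_of_nonneg_right h2c (abs_nonneg w)
            linarith
    calc |E| ≤ |(-(u ^ 2) * R ^ 3 * m' + 2 * m * R ^ 2 * (3 + u * R)) * w ^ 2|
          + |2 * m * R * p * (u ^ 2 * q - 2 * (1 + u * R) * w)| := abs_sub _ _
      _ ≤ _ := by linarith
  -- final comparison
  rw [mul_div_assoc', div_le_iff₀ ha]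
  have expand : (100 * M + 1) * (u ^ 2 * q ^ 2 + R / |u| * w ^ 2 + p ^ 2) * |u|
      = (100 * M + 1) * (u ^ 2 * q ^ 2 * |u| + R * w ^ 2 + p ^ 2 * |u|) := by
    field_simp
  rw [expand]
  have key : (M * R ^ 3 * u ^ 2 * w ^ 2 + 6 * M * R ^ 2 * w ^ 2
      + 2 * m * R * |p| * (u ^ 2 * |q| + 2 * |w|)) * 4
      ≤ (100 * M + 1) * (u ^ 2 * q ^ 2 * |u| + R * w ^ 2 + p ^ 2 * |u|) := by
    have hw2 : w ^ 2 = |w| ^ 2 := (sq_abs w).symm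
    have hq2 : q ^ 2 = |q| ^ 2 := (sq_abs q).symm
    have hp2 : p ^ 2 = |p| ^ 2 := (sq_abs p).symm
    have hu2 : u ^ 2 = |u| ^ 2 := (sq_abs u).symm
    rw [hw2, hq2, hp2, hu2]
    exact key_aux M R |u| m |p| |q| |w| hM hR hR1 hm hmM hu1 huR
      (abs_nonneg p) (abs_nonneg q) (abs_nonneg w)
  calc |E| * 4 ≤ (M * R ^ 3 * u ^ 2 * w ^ 2 + 6 * M * R ^ 2 * w ^ 2
        + 2 * m * R * |p| * (u ^ 2 * |q| + 2 * |w|)) * 4 := by linarith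
    _ ≤ _ := key
end
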